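/- With the Paillier setup, Paillier encryption is homomorphic under scalar multiplication: for natural numbers m and a and a unit r of ZMod (N²), the ciphertext c = Γ^m·r^N satisfies D(c^a) = image of a·m in ZMod N. -/

import Mathlib

/-- The Paillier `L` function: for a unit `w` of `ZMod (N^2)`,
`L(w) = (w.val - 1) / N`, viewed as an element of `ZMod N`. -/
def paillierL (N : ℕ) (w : (ZMod (N ^ 2))ˣ) : ZMod N :=
  ((((w : ZMod (N ^ 2)).val - 1) / N : ℕ) : ZMod N)

/-- Paillier decryption: `D(c) = L(c^λ) · μ`. -/
def paillierD (N lam : ℕ) (μ : ZMod N) (c : (ZMod (N ^ 2))ˣ) : ZMod N :=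
  paillierL N (c ^ lam) * μ

/-! Since the Carmichael exponent `λ(N)` divides `lam = lcm(p - 1, q - 1)`, every `u ^ lam`
reduces to `1` modulo `N`, i.e. equals `1 + N g` in `ZMod (N ^ 2)`, and then `L(u ^ lam) = g`.
As `N ^ 2 = 0` there, `(1 + N g) ^ n = 1 + n N g`; hence `((Γ ^ m r ^ N) ^ a) ^ lam` is
`1 + N (a m g)` with `g = L(Γ ^ lam)`, the randomness contributing only a multiple of `N ^ 2`. -/

open ArithmeticFunction

theorem ArithmeticFunction.carmichael_mul_dvd_lcm_totient {a b : ℕ} (h : a.Coprime b) :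
    carmichael (a * b) ∣ Nat.lcm a.totient b.totient := by
  rw [carmichael_mul h]
  exact Nat.lcm_dvd ((carmichael_dvd_totient a).trans (Nat.dvd_lcm_left _ _))
    ((carmichael_dvd_totient b).trans (Nat.dvd_lcm_right _ _))

theorem one_add_pow_of_sq_eq_zero {R : Type*} [CommRing R] {ε : R} (h : ε ^ 2 = 0) (n : ℕ) :
    (1 + ε) ^ n = 1 + n * ε := by
  induction n with
  | zero => simp
  | succ n ih =>
    rw [pow_succ, ih]
    push_cast
    linear_combination (n : R) * h

namespace ZMod

variable {N : ℕ}

theorem natCast_sq_self (n : ℕ) : (n : ZMod (n ^ 2)) ^ 2 = 0 := by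
  exact_mod_cast natCast_self (n ^ 2)

theorem exists_eq_one_add_mul_of_unitsMap_eq_one (hN : 1 < N) {w : (ZMod (N ^ 2))ˣ}
    (hw : unitsMap (dvd_pow_self N two_ne_zero) w = 1) :
    ∃ k : ℕ, (w : ZMod (N ^ 2)) = 1 + N * k := by
  have : NeZero (N ^ 2) := ⟨by positivity⟩
  have hcast : ((w : ZMod (N ^ 2)).val : ZMod N) = 1 := by
    have := congrArg Units.val hw
    rwa [unitsMap_val, cast_eq_val, Units.val_one] at this
  have hmod : (w : ZMod (N ^ 2)).val % N = 1 := by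
    rw [← Nat.mod_eq_of_lt hN]
    exact (natCast_eq_natCast_iff' _ 1 N).mp (by rw [Nat.cast_one]; exact hcast)
  obtain ⟨k, hk⟩ : ∃ k, (w : ZMod (N ^ 2)).val = 1 + N * k :=
    ⟨_, (hmod ▸ Nat.mod_add_div _ _).symm⟩
  refine ⟨k, ?_⟩
  rw [← natCast_zmod_val (w : ZMod (N ^ 2)), hk]
  push_cast
  rfl

theorem exists_pow_eq_one_add_mul_of_carmichael_dvd (hN : 1 < N) {k : ℕ}
    (hk : carmichael N ∣ k) (u : (ZMod (N ^ 2))ˣ) :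
    ∃ g : ℕ, ((u ^ k : (ZMod (N ^ 2))ˣ) : ZMod (N ^ 2)) = 1 + N * g := by
  obtain ⟨j, rfl⟩ := hk
  refine exists_eq_one_add_mul_of_unitsMap_eq_one hN ?_
  rw [map_pow, pow_mul, pow_carmichael, one_pow]

end ZMod

theorem paillierL_eq_of_eq_one_add_mul {N : ℕ} (hN : 1 < N) {w : (ZMod (N ^ 2))ˣ} {k : ℕ}
    (hw : (w : ZMod (N ^ 2)) = 1 + N * k) : paillierL N w = k := by
  have hval : (w : ZMod (N ^ 2)).val = 1 + N * (k % N) := by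
    rw [hw, show (1 + N * k : ZMod (N ^ 2)) = ((1 + N * k : ℕ) : ZMod (N ^ 2)) by push_cast; rfl,
      ZMod.val_natCast, sq, Nat.mod_mul, Nat.add_mul_div_left _ _ (by omega),
      Nat.add_mul_mod_self_left, Nat.mod_eq_of_lt hN, Nat.div_eq_of_lt hN, zero_add]
  rw [paillierL, hval, Nat.add_sub_cancel_left, Nat.mul_div_cancel_left _ (by omega),
    ZMod.natCast_mod]

theorem paillier_scalar_homomorphic_general
    (p q : ℕ) (hp : p.Prime) (hq : q.Prime) (hpq : p ≠ q)
    (N : ℕ) (hN : N = p * q)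
    (lam : ℕ) (hlam : lam = Nat.lcm (p - 1) (q - 1))
    (Γ : (ZMod (N ^ 2))ˣ) (μ : ZMod N)
    (hμ : paillierL N (Γ ^ lam) * μ = 1)
    (m a : ℕ) (r : (ZMod (N ^ 2))ˣ) :
    paillierD N lam μ ((Γ ^ m * r ^ N) ^ a) = ((a * m : ℕ) : ZMod N) := by
  have hN1 : 1 < N := by rw [hN]; nlinarith [hp.two_le, hq.two_le]
  have hcarm : carmichael N ∣ lam := by
    rw [hN, hlam, ← Nat.totient_prime hp, ← Nat.totient_prime hq]
    exact carmichael_mul_dvd_lcm_totient ((Nat.coprime_primes hp hq).mpr hpq)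
  obtain ⟨g, hg⟩ := ZMod.exists_pow_eq_one_add_mul_of_carmichael_dvd hN1 hcarm Γ
  obtain ⟨s, hs⟩ := ZMod.exists_pow_eq_one_add_mul_of_carmichael_dvd hN1 hcarm r
  have hN2 := ZMod.natCast_sq_self N
  have hc : ((((Γ ^ m * r ^ N) ^ a) ^ lam : (ZMod (N ^ 2))ˣ) : ZMod (N ^ 2)) =
      1 + N * (a * m * g : ℕ) := by
    calc _ = ((Γ ^ lam : (ZMod (N ^ 2))ˣ) : ZMod (N ^ 2)) ^ (a * m) *
          ((r ^ lam : (ZMod (N ^ 2))ˣ) : ZMod (N ^ 2)) ^ (a * N) := by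
          push_cast; ring
      _ = (1 + (a * m : ℕ) * (N * g)) * (1 + (a * N : ℕ) * (N * s)) := by
          rw [hg, hs, one_add_pow_of_sq_eq_zero (by rw [mul_pow, hN2, zero_mul]),
            one_add_pow_of_sq_eq_zero (by rw [mul_pow, hN2, zero_mul])]
      _ = _ := by
          push_cast; linear_combination (a * s + a ^ 2 * m * N * g * s : ZMod (N ^ 2)) * hN2
  rw [paillierL_eq_of_eq_one_add_mul hN1 hg] at hμ
  rw [paillierD, paillierL_eq_of_eq_one_add_mul hN1 hc]
  push_cast
  linear_combination (a * m : ZMod N) * hμ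

theorem paillier_scalar_homomorphic
    (p q : ℕ) (hp : p.Prime) (hq : q.Prime) (hpq : p ≠ q)
    (N : ℕ) (hN : N = p * q)
    (hco : Nat.Coprime N ((p - 1) * (q - 1)))
    (lam : ℕ) (hlam : lam = Nat.lcm (p - 1) (q - 1))
    (Γ : (ZMod (N ^ 2))ˣ) (μ : ZMod N)
    (hμ : paillierL N (Γ ^ lam) * μ = 1)
    (m a : ℕ) (r : (ZMod (N ^ 2))ˣ) :
    paillierD N lam μ ((Γ ^ m * r ^ N) ^ a) = ((a * m : ℕ) : ZMod N) :=
  paillier_scalar_homomorphic_general p q hp hq hpq N hN lam hlam Γ μ hμ m a r
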